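/- Under the assumptions of the previous statement, for every ε > 0 the Tikhonov-regularized functional J_ε(δ,u) = 2 f^T u − ∑_e ρ_e E(δ_e) u^T K_e u − (ε/2)‖δ‖² is strictly concave in (δ,u); in particular its Hessian quadratic form satisfies (x,y)^T H_ε (x,y) = −∑_e ρ_e E(δ_e) (y − v_e)^T K_e (y − v_e) − ε‖x‖² < 0 for all (x,y) ≠ 0. -/

import Mathlib

/-!
`(s, u) ↦ uᵀKu / s` is the perspective of the convex quadratic form `u ↦ uᵀKu`, hence jointly convex
for `s > 0`. Since `1 / E(t) = (1 - t) / E₀ + t / E_D` is affine in `t`, each compliance term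
`ρₑ E(δₑ) uᵀKₑu` is jointly convex in `(δ, u)`. Strict concavity of `J_ε` then comes from the
Tikhonov term along directions that move `δ`, and from positive definiteness of `K(δ)` along
directions that fix `δ`. The Hessian form is negative for the same reason: its compliance part is
`≤ 0`, the Tikhonov part is `< 0` when `x ≠ 0`, and for `x = 0` the compliance part is `-yᵀK(δ)y`.
-/

open Matrix Finset

lemma ConvexOn.perspective {F : Type*} [AddCommGroup F] [Module ℝ F] {g : F → ℝ}
    (hg : ConvexOn ℝ Set.univ g) :
    ConvexOn ℝ (Set.Ioi 0 ×ˢ Set.univ) fun p : ℝ × F => p.1 * g (p.1⁻¹ • p.2) := by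
  refine ⟨(convex_Ioi 0).prod convex_univ, ?_⟩
  rintro ⟨s, u⟩ ⟨hs, -⟩ ⟨s', u'⟩ ⟨hs', -⟩ a b ha hb hab
  simp only [Set.mem_Ioi] at hs hs'
  have ht : 0 < a * s + b * s' := by simpa using (convex_Ioi (0 : ℝ)) hs hs' ha hb hab
  simp only [Prod.smul_mk, Prod.mk_add_mk, smul_eq_mul]
  have hw : a * s / (a * s + b * s') + b * s' / (a * s + b * s') = 1 := by field_simp
  have hcomb : (a * s + b * s')⁻¹ • (a • u + b • u') =
      (a * s / (a * s + b * s')) • (s⁻¹ • u) + (b * s' / (a * s + b * s')) • (s'⁻¹ • u') := by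
    simp only [smul_add, smul_smul]
    congr 2 <;> field_simp
  calc (a * s + b * s') * g ((a * s + b * s')⁻¹ • (a • u + b • u'))
      ≤ (a * s + b * s') * (a * s / (a * s + b * s') * g (s⁻¹ • u)
          + b * s' / (a * s + b * s') * g (s'⁻¹ • u')) := by
        rw [hcomb]
        gcongr
        exact hg.2 trivial trivial (by positivity) (by positivity) hw
    _ = a * (s * g (s⁻¹ • u)) + b * (s' * g (s'⁻¹ • u')) := by field_simp

lemma ConvexOn.fun_sum {𝕜 E β ι : Type*} [Semiring 𝕜] [PartialOrder 𝕜] [AddCommMonoid E]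
    [AddCommMonoid β] [PartialOrder β] [IsOrderedAddMonoid β] [SMul 𝕜 E] [Module 𝕜 β]
    {s : Set E} (hs : Convex 𝕜 s) {t : Finset ι} {f : ι → E → β}
    (hf : ∀ i ∈ t, ConvexOn 𝕜 s (f i)) : ConvexOn 𝕜 s fun x => ∑ i ∈ t, f i x := by
  classical
  induction t using Finset.induction_on with
  | empty => simpa using convexOn_const 0 hs
  | insert i t hi ih =>
    simp only [Finset.sum_insert hi]
    exact (hf i (mem_insert_self i t)).add (ih fun j hj => hf j (mem_insert_of_mem hj))

lemma ConvexOn.add_strictConvexOn_comp_fst {𝕜 E F β : Type*} [Semiring 𝕜] [PartialOrder 𝕜]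
    [AddCommMonoid E] [AddCommMonoid F] [Module 𝕜 E] [Module 𝕜 F]
    [AddCommMonoid β] [PartialOrder β] [IsOrderedCancelAddMonoid β] [Module 𝕜 β]
    {s : Set E} {t : Set F} {φ : E × F → β} {ψ : E → β}
    (hφ : ConvexOn 𝕜 (s ×ˢ t) φ) (hψ : StrictConvexOn 𝕜 s ψ)
    (hfib : ∀ x ∈ s, StrictConvexOn 𝕜 t fun y => φ (x, y)) :
    StrictConvexOn 𝕜 (s ×ˢ t) fun p => φ p + ψ p.1 := by
  refine ⟨hφ.1, ?_⟩
  rintro ⟨x, y⟩ ⟨hx, hy⟩ ⟨x', y'⟩ ⟨hx', hy'⟩ hne a b ha hb hab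
  simp only [Prod.smul_mk, Prod.mk_add_mk, smul_add]
  rw [add_add_add_comm]
  obtain rfl | hxx := eq_or_ne x x'
  · have hyy : y ≠ y' := fun h => hne (h ▸ rfl)
    rw [Convex.combo_self hab x, Convex.combo_self hab (ψ x)]
    exact add_lt_add_left ((hfib x hx).2 hy hy' hyy ha hb hab) _
  · exact add_lt_add_of_le_of_lt (hφ.2 ⟨hx, hy⟩ ⟨hx', hy'⟩ ha.le hb.le hab)
      (hψ.2 hx hx' hxx ha hb hab)

lemma strictConvexOn_mul_sum_sq {ι : Type*} [Fintype ι] {c : ℝ} (hc : 0 < c) :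
    StrictConvexOn ℝ Set.univ fun x : ι → ℝ => c * ∑ i, x i ^ 2 := by
  refine ⟨convex_univ, fun x _ y _ hxy a b ha hb hab => ?_⟩
  obtain ⟨i, hi⟩ := Function.ne_iff.mp hxy
  have hsq : StrictConvexOn ℝ Set.univ fun t : ℝ => t ^ 2 :=
    even_two.strictConvexOn_pow two_ne_zero
  have hlt : ∑ j, (a * x j + b * y j) ^ 2 < ∑ j, (a * x j ^ 2 + b * y j ^ 2) :=
    Finset.sum_lt_sum (fun j _ => hsq.convexOn.2 trivial trivial ha.le hb.le hab)
      ⟨i, mem_univ i, hsq.2 trivial trivial hi ha hb hab⟩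
  rw [sum_add_distrib, ← mul_sum, ← mul_sum] at hlt
  simp only [Pi.add_apply, Pi.smul_apply, smul_eq_mul]
  linarith [mul_lt_mul_of_pos_left hlt hc]

namespace Matrix

variable {m ι : Type*} [Fintype m] [Fintype ι]

lemma dotProduct_sum_smul_mulVec {R : Type*} [CommSemiring R] (c : ι → R)
    (K : ι → Matrix m m R) (u : m → R) :
    u ⬝ᵥ (∑ e, c e • K e) *ᵥ u = ∑ e, c e * (u ⬝ᵥ K e *ᵥ u) := by
  simp [sum_mulVec, dotProduct_sum, smul_mulVec, dotProduct_smul]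

lemma IsHermitian.dotProduct_mulVec_combo {K : Matrix m m ℝ} (hK : K.IsHermitian) {a b : ℝ}
    (hab : a + b = 1) (u v : m → ℝ) :
    (a • u + b • v) ⬝ᵥ K *ᵥ (a • u + b • v) =
      a * (u ⬝ᵥ K *ᵥ u) + b * (v ⬝ᵥ K *ᵥ v) - a * b * ((u - v) ⬝ᵥ K *ᵥ (u - v)) := by
  have hsymm : v ⬝ᵥ K *ᵥ u = u ⬝ᵥ K *ᵥ v := by
    rw [dotProduct_mulVec, dotProduct_comm, ← mulVec_transpose,
      ← conjTranspose_eq_transpose_of_trivial, hK.eq]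
  obtain rfl : b = 1 - a := by linarith
  simp only [mulVec_add, mulVec_sub, mulVec_smul, dotProduct_add, add_dotProduct, dotProduct_sub,
    sub_dotProduct, dotProduct_smul, smul_dotProduct, smul_eq_mul, hsymm]
  ring

lemma PosSemidef.convexOn_dotProduct_mulVec {K : Matrix m m ℝ} (hK : K.PosSemidef) :
    ConvexOn ℝ Set.univ fun u : m → ℝ => u ⬝ᵥ K *ᵥ u := by
  refine ⟨convex_univ, fun u _ v _ a b ha hb hab => ?_⟩
  have := mul_nonneg (mul_nonneg ha hb) (hK.dotProduct_mulVec_nonneg (u - v))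
  dsimp only
  rw [smul_eq_mul, smul_eq_mul, hK.1.dotProduct_mulVec_combo hab]
  simp only [star_trivial] at this
  linarith

lemma PosDef.strictConvexOn_dotProduct_mulVec {K : Matrix m m ℝ} (hK : K.PosDef) :
    StrictConvexOn ℝ Set.univ fun u : m → ℝ => u ⬝ᵥ K *ᵥ u := by
  refine ⟨convex_univ, fun u _ v _ huv a b ha hb hab => ?_⟩
  have := mul_pos (mul_pos ha hb) (hK.dotProduct_mulVec_pos (sub_ne_zero.2 huv))
  dsimp only
  rw [smul_eq_mul, smul_eq_mul, hK.1.dotProduct_mulVec_combo hab]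
  simp only [star_trivial] at this
  linarith

lemma PosDef.strictConvexOn_sum_mul_dotProduct_mulVec {K : ι → Matrix m m ℝ} {w : ι → ℝ}
    (hpd : (∑ e, w e • K e).PosDef) :
    StrictConvexOn ℝ Set.univ fun u : m → ℝ => ∑ e, w e * (u ⬝ᵥ K e *ᵥ u) :=
  hpd.strictConvexOn_dotProduct_mulVec.congr fun u _ => dotProduct_sum_smul_mulVec w K u

lemma PosSemidef.convexOn_dotProduct_mulVec_div {K : Matrix m m ℝ} (hK : K.PosSemidef) :
    ConvexOn ℝ (Set.Ioi 0 ×ˢ Set.univ) fun p : ℝ × (m → ℝ) => (p.2 ⬝ᵥ K *ᵥ p.2) / p.1 := by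
  refine hK.convexOn_dotProduct_mulVec.perspective.congr fun p hp => ?_
  have : p.1 ≠ 0 := (Set.mem_Ioi.1 hp.1).ne'
  simp only [mulVec_smul, dotProduct_smul, smul_dotProduct, smul_eq_mul]
  field_simp

end Matrix

lemma convexOn_sum_mul_inv_mul_dotProduct_mulVec {ι m : Type*} [Fintype ι] [Fintype m]
    {D : Set ℝ} (hD : Convex ℝ D) (σ : ℝ →ᵃ[ℝ] ℝ) (hσ : ∀ t ∈ D, 0 < σ t)
    {K : ι → Matrix m m ℝ} (hK : ∀ e, (K e).PosSemidef) {ρ : ι → ℝ} (hρ : ∀ e, 0 ≤ ρ e) :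
    ConvexOn ℝ ((Set.univ.pi fun _ => D) ×ˢ Set.univ)
      fun p : (ι → ℝ) × (m → ℝ) => ∑ e, ρ e * (σ (p.1 e))⁻¹ * (p.2 ⬝ᵥ K e *ᵥ p.2) := by
  have hS : Convex ℝ ((Set.univ.pi fun _ : ι => D) ×ˢ (Set.univ : Set (m → ℝ))) :=
    (convex_pi fun _ _ => hD).prod convex_univ
  refine ConvexOn.fun_sum hS fun e _ => ?_
  let A : (ι → ℝ) × (m → ℝ) →ᵃ[ℝ] ℝ × (m → ℝ) :=
    (σ.comp (LinearMap.proj e).toAffineMap).prodMap (AffineMap.id ℝ (m → ℝ))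
  have hAe := ((hK e).convexOn_dotProduct_mulVec_div.comp_affineMap A).subset
    (fun p hp => ⟨hσ _ (hp.1 e (Set.mem_univ e)), trivial⟩) hS
  refine (hAe.smul (hρ e)).congr fun p _ => ?_
  simp [A, div_eq_mul_inv]
  ring

lemma sum_mul_dotProduct_mulVec_sub_smul_add_mul_sum_sq_pos {ι m : Type*} [Fintype ι]
    [Fintype m] {K : ι → Matrix m m ℝ} (hK : ∀ e, (K e).PosSemidef) {w : ι → ℝ}
    (hw : ∀ e, 0 ≤ w e) (hpd : (∑ e, w e • K e).PosDef) {ε : ℝ} (hε : 0 < ε)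
    (z : ι → m → ℝ) {x : ι → ℝ} {y : m → ℝ} (hxy : (x, y) ≠ (0, 0)) :
    0 < ∑ e, w e * ((y - x e • z e) ⬝ᵥ K e *ᵥ (y - x e • z e)) + ε * ∑ e, x e ^ 2 := by
  obtain rfl | hx := eq_or_ne x 0
  · have hy : y ≠ 0 := fun h => hxy (by rw [h])
    simpa [dotProduct_sum_smul_mulVec] using hpd.dotProduct_mulVec_pos hy
  · obtain ⟨i, hi⟩ := Function.ne_iff.mp hx
    have hQ : 0 ≤ ∑ e, w e * ((y - x e • z e) ⬝ᵥ K e *ᵥ (y - x e • z e)) :=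
      sum_nonneg fun e _ => mul_nonneg (hw e) <| by
        simpa only [star_trivial] using (hK e).dotProduct_mulVec_nonneg _
    replace hi : x i ≠ 0 := hi
    have hx2 : 0 < ∑ e, x e ^ 2 :=
      sum_pos' (fun _ _ => sq_nonneg _) ⟨i, mem_univ i, by positivity⟩
    positivity

/-- Strict concavity of the Tikhonov-regularized functional
`J_ε(δ,u) = 2 fᵀu − ∑ₑ ρₑ E(δₑ) uᵀKₑu − (ε/2)‖δ‖²` for `ε > 0`,
and strict negativity of the Hessian quadratic form
`−∑ₑ ρₑ E(δₑ)(y−vₑ)ᵀKₑ(y−vₑ) − ε‖x‖² < 0` for `(x,y) ≠ 0`. -/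
theorem stmt_7 (n m : ℕ) (E0 ED ε : ℝ) (hED : 0 < ED) (hlt : ED < E0)
    (hε : 0 < ε)
    (K : Fin n → Matrix (Fin m) (Fin m) ℝ) (hK : ∀ e, (K e).PosSemidef)
    (ρ : Fin n → ℝ) (hρ : ∀ e, 0 < ρ e)
    (f : Fin m → ℝ)
    (E : ℝ → ℝ) (hE : ∀ t, E t = ((1 - t) / E0 + t / ED)⁻¹)
    (hKpd : ∀ δ : Fin n → ℝ, (∀ e, δ e ∈ Set.Icc (0:ℝ) 1) →
      (∑ e, (ρ e * E (δ e)) • K e).PosDef) :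
    StrictConcaveOn ℝ (((Set.univ : Set (Fin n)).pi fun _ => Set.Icc (0:ℝ) 1) ×ˢ
        (Set.univ : Set (Fin m → ℝ)))
      (fun p : (Fin n → ℝ) × (Fin m → ℝ) =>
        2 * (f ⬝ᵥ p.2) - (∑ e, ρ e * E (p.1 e) * (p.2 ⬝ᵥ (K e).mulVec p.2))
          - ε / 2 * (∑ e, p.1 e ^ 2)) ∧
    ∀ (δ : Fin n → ℝ), (∀ e, δ e ∈ Set.Icc (0:ℝ) 1) →
      ∀ (u : Fin m → ℝ) (x : Fin n → ℝ) (y : Fin m → ℝ),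
      (x, y) ≠ (0, 0) →
      (-(∑ e, ρ e * E (δ e) *
          ((y - (x e * E (δ e) * (1 / ED - 1 / E0)) • u) ⬝ᵥ
            (K e).mulVec (y - (x e * E (δ e) * (1 / ED - 1 / E0)) • u)))
        - ε * (∑ e, x e ^ 2)) < 0 := by
  set σ : ℝ →ᵃ[ℝ] ℝ := AffineMap.lineMap E0⁻¹ ED⁻¹
  have hσ : ∀ t ∈ Set.Icc (0:ℝ) 1, 0 < σ t := fun t ht =>
    (convex_Ioi 0).lineMap_mem (inv_pos.2 (hED.trans hlt)) (inv_pos.2 hED) ht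
  have hEσ : ∀ t, E t = (σ t)⁻¹ := fun t => by
    simp [σ, hE, AffineMap.lineMap_apply_module, div_eq_mul_inv]
  refine ⟨?_, fun δ hδ u x y hxy => ?_⟩
  · have hfib : ∀ δ ∈ (Set.univ : Set (Fin n)).pi (fun _ => Set.Icc (0:ℝ) 1),
        StrictConvexOn ℝ Set.univ fun u : Fin m → ℝ =>
          ∑ e, ρ e * (σ (δ e))⁻¹ * (u ⬝ᵥ K e *ᵥ u) := fun δ hδ => by
      have hpd := hKpd δ fun e => hδ e (Set.mem_univ e)
      simp only [hEσ] at hpd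
      exact hpd.strictConvexOn_sum_mul_dotProduct_mulVec
    have hG := (convexOn_sum_mul_inv_mul_dotProduct_mulVec (convex_Icc 0 1) σ hσ hK
      fun e => (hρ e).le).add_strictConvexOn_comp_fst
        ((strictConvexOn_mul_sum_sq (half_pos hε)).subset (Set.subset_univ _)
          (convex_pi fun _ _ => convex_Icc 0 1)) hfib
    have hL := ((2 : ℝ) • (dotProductBilin ℝ ℝ f).comp
      (LinearMap.snd ℝ (Fin n → ℝ) (Fin m → ℝ))).concaveOn hG.1
    refine (hL.sub_strictConvexOn hG).congr fun p _ => ?_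
    simp [hEσ]
    ring
  · have := sum_mul_dotProduct_mulVec_sub_smul_add_mul_sum_sq_pos hK
      (fun e => (mul_pos (hρ e) (by rw [hEσ]; exact inv_pos.2 (hσ _ (hδ e)))).le) (hKpd δ hδ) hε
      (fun e => E (δ e) • (1 / ED - 1 / E0) • u) hxy
    simp only [mul_smul] at this ⊢
    linarith
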